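/- arXiv:2404.17947 — 2 statements merged into one kernel-verified Lean document; each statement's English description precedes it below -/
import Mathlib

section
/- Consider an L-layer GCN as below, where Ã ∈ ℝ^{n×n} has nonnegative entries, let X ∈ ℝ^{n×K}, σ > 0, ε ≥ 0, and let μ be a probability measure on ℝ^{n×K} whose support is contained in {X' : ‖X_v − X'_v‖_∞ ≤ ε for every row v}. Then μ({X' : max_u ‖F_Ã(X')_u − F_Ã(X)_u‖_∞ > σ}) ≤ (∏_{ℓ=1}^{L} ‖W^{(ℓ)}‖_∞) · ε · ŵ_G / σ, where ŵ_G = max_u ŵ_u. -/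
/-!
Since every activation is 1-Lipschitz and `h ↦ hW` has `ℓ∞` operator norm `‖W‖_∞`, a row
perturbation `δ` of the input of a layer becomes a row perturbation at most
`‖W‖_∞ · Ã δ` of its output (using `Ã ≥ 0`). By induction the rows of the output of the
network move by at most `(∏ ℓ, ‖W⁽ˡ⁾‖_∞) · ε · ŵ_u` wherever the input rows move by at most
`ε`, so almost surely the output moves by at most `B := (∏ ℓ, ‖W⁽ˡ⁾‖_∞) · ε · ŵ_G`. The event
`{σ < ‖F(X') - F(X)‖}` is then null if `B ≤ σ`, and otherwise `B / σ > 1` bounds any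
probability.
-/

open MeasureTheory
open scoped BigOperators ENNReal NNReal

/-- An `L`-layer GCN: `H⁽⁰⁾ = X` and `H⁽ˡ⁺¹⁾ = φ⁽ˡ⁺¹⁾(Ã H⁽ˡ⁾ W⁽ˡ⁺¹⁾)`, with the
activation applied entrywise. -/
noncomputable def gcn {n : ℕ} (d : ℕ → ℕ) (φ : ℕ → ℝ → ℝ)
    (A : Matrix (Fin n) (Fin n) ℝ)
    (W : (ℓ : ℕ) → Matrix (Fin (d ℓ)) (Fin (d (ℓ + 1))) ℝ)
    (X : Matrix (Fin n) (Fin (d 0)) ℝ) : (ℓ : ℕ) → Matrix (Fin n) (Fin (d ℓ)) ℝ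
  | 0 => X
  | (ℓ + 1) => (A * gcn d φ A W X ℓ * W ℓ).map (φ (ℓ + 1))

/-- The operator norm of the map `h ↦ hW` on row vectors with respect to the `ℓ∞`
norm: the maximum absolute column sum of `W`. -/
noncomputable def opNormInf {m e : ℕ} (W : Matrix (Fin m) (Fin e) ℝ) : ℝ :=
  ⨆ j : Fin e, ∑ i : Fin m, |W i j|

instance matrixMeasurableSpace {a b : ℕ} : MeasurableSpace (Matrix (Fin a) (Fin b) ℝ) :=
  (inferInstance : MeasurableSpace (Fin a → Fin b → ℝ))

open Matrix Finset

lemma opNormInf_nonneg {m e : ℕ} (W : Matrix (Fin m) (Fin e) ℝ) : 0 ≤ opNormInf W :=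
  Real.iSup_nonneg fun _ => sum_nonneg fun _ _ => abs_nonneg _

lemma sum_abs_le_opNormInf {m e : ℕ} (W : Matrix (Fin m) (Fin e) ℝ) (j : Fin e) :
    ∑ i, |W i j| ≤ opNormInf W :=
  le_ciSup (f := fun j => ∑ i, |W i j|) (Set.finite_range _).bddAbove j

lemma norm_vecMul_le_opNormInf_mul {m e : ℕ} (h : Fin m → ℝ) (W : Matrix (Fin m) (Fin e) ℝ) :
    ‖h ᵥ* W‖ ≤ opNormInf W * ‖h‖ := by
  refine (pi_norm_le_iff_of_nonneg (mul_nonneg (opNormInf_nonneg W) (norm_nonneg h))).2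
    fun j => ?_
  calc ‖(h ᵥ* W) j‖ = |∑ i, h i * W i j| := rfl
    _ ≤ ∑ i, |h i| * |W i j| := by
        simpa only [abs_mul] using abs_sum_le_sum_abs (fun i => h i * W i j) univ
    _ ≤ ∑ i, ‖h‖ * |W i j| :=
        sum_le_sum fun i _ => mul_le_mul_of_nonneg_right (norm_le_pi_norm h i) (abs_nonneg _)
    _ ≤ ‖h‖ * opNormInf W := by
        rw [← mul_sum]
        exact mul_le_mul_of_nonneg_left (sum_abs_le_opNormInf W j) (norm_nonneg h)
    _ = opNormInf W * ‖h‖ := mul_comm _ _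

lemma norm_mul_apply_le_of_nonneg {ι κ ν : Type*} [Fintype κ] [Fintype ν]
    (A : Matrix ι κ ℝ) (hA : ∀ i k, 0 ≤ A i k) (M : Matrix κ ν ℝ) (i : ι) :
    ‖(A * M) i‖ ≤ ∑ k, A i k * ‖M k‖ := by
  rw [mul_apply_eq_vecMul, vecMul_eq_sum]
  refine (norm_sum_le _ _).trans (sum_le_sum fun k _ => ?_)
  rw [norm_smul, Real.norm_of_nonneg (hA i k)]

lemma norm_comp_sub_comp_le {ι E F : Type*} [Fintype ι] [SeminormedAddCommGroup E]
    [SeminormedAddCommGroup F] {f : E → F} (hf : LipschitzWith 1 f) (x y : ι → E) :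
    ‖f ∘ x - f ∘ y‖ ≤ ‖x - y‖ :=
  (pi_norm_le_iff_of_nonneg (norm_nonneg _)).2 fun i =>
    calc ‖(f ∘ x - f ∘ y) i‖ = ‖f (x i) - f (y i)‖ := rfl
      _ ≤ ‖x i - y i‖ := by simpa using hf.norm_sub_le (x i) (y i)
      _ ≤ ‖x - y‖ := norm_le_pi_norm (x - y) i

lemma norm_gcnLayer_sub_le {n m e : ℕ} (A : Matrix (Fin n) (Fin n) ℝ) (hA : ∀ i j, 0 ≤ A i j)
    (W : Matrix (Fin m) (Fin e) ℝ) {f : ℝ → ℝ} (hf : LipschitzWith 1 f)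
    (M M' : Matrix (Fin n) (Fin m) ℝ) (u : Fin n) :
    ‖(A * M' * W).map f u - (A * M * W).map f u‖ ≤
      opNormInf W * ∑ v, A u v * ‖M' v - M v‖ :=
  calc ‖(A * M' * W).map f u - (A * M * W).map f u‖
      ≤ ‖(A * M' * W) u - (A * M * W) u‖ := norm_comp_sub_comp_le hf _ _
    _ = ‖(A * (M' - M)) u ᵥ* W‖ := by
        rw [← mul_apply_eq_vecMul, Matrix.mul_sub, Matrix.sub_mul]; rfl
    _ ≤ opNormInf W * ‖(A * (M' - M)) u‖ := norm_vecMul_le_opNormInf_mul _ W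
    _ ≤ opNormInf W * ∑ v, A u v * ‖M' v - M v‖ :=
        mul_le_mul_of_nonneg_left (norm_mul_apply_le_of_nonneg A hA _ u) (opNormInf_nonneg W)

lemma sum_mul_sum_eq_sum_mul_apply {ι R : Type*} [Fintype ι] [Semiring R] (A B : Matrix ι ι R)
    (u : ι) :
    ∑ v, A u v * ∑ w, B v w = ∑ w, (A * B) u w := by
  simp only [mul_apply, mul_sum]
  exact sum_comm

lemma norm_gcn_sub_le {n : ℕ} (d : ℕ → ℕ) (φ : ℕ → ℝ → ℝ)
    (A : Matrix (Fin n) (Fin n) ℝ) (hA : ∀ i j, 0 ≤ A i j)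
    (W : (ℓ : ℕ) → Matrix (Fin (d ℓ)) (Fin (d (ℓ + 1))) ℝ) (hφ : ∀ ℓ, LipschitzWith 1 (φ ℓ))
    {X X' : Matrix (Fin n) (Fin (d 0)) ℝ} {ε : ℝ} (hX : ∀ v, ‖X' v - X v‖ ≤ ε) (L : ℕ)
    (u : Fin n) :
    ‖gcn d φ A W X' L u - gcn d φ A W X L u‖ ≤
      (∏ ℓ ∈ range L, opNormInf (W ℓ)) * ε * ∑ v, (A ^ L) u v := by
  induction L generalizing u with
  | zero => simpa [gcn, one_apply] using hX u
  | succ L ih =>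
    set c := (∏ ℓ ∈ range L, opNormInf (W ℓ)) * ε
    calc ‖gcn d φ A W X' (L + 1) u - gcn d φ A W X (L + 1) u‖
        ≤ opNormInf (W L) * ∑ v, A u v * ‖gcn d φ A W X' L v - gcn d φ A W X L v‖ :=
          norm_gcnLayer_sub_le A hA (W L) (hφ (L + 1)) _ _ u
      _ ≤ opNormInf (W L) * ∑ v, A u v * (c * ∑ w, (A ^ L) v w) :=
          mul_le_mul_of_nonneg_left
            (sum_le_sum fun v _ => mul_le_mul_of_nonneg_left (ih v) (hA u v))
            (opNormInf_nonneg _)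
      _ = (∏ ℓ ∈ range (L + 1), opNormInf (W ℓ)) * ε * ∑ w, (A ^ (L + 1)) u w := by
          simp only [mul_left_comm _ c, ← mul_sum, sum_mul_sum_eq_sum_mul_apply, pow_succ',
            prod_range_succ, c]
          ring

lemma measure_lt_le_ofReal_div_of_ae_le {α : Type*} [MeasurableSpace α] (μ : Measure α)
    [IsProbabilityMeasure μ] {f : α → ℝ} {B σ : ℝ} (hσ : 0 < σ) (hf : ∀ᵐ x ∂μ, f x ≤ B) :
    μ {x | σ < f x} ≤ ENNReal.ofReal (B / σ) := by
  by_cases hBσ : B ≤ σ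
  · have hnull : μ {x | σ < f x} = 0 :=
      measure_mono_null (fun x (hx : σ < f x) (hle : f x ≤ B) => (hle.trans hBσ).not_gt hx)
        (ae_iff.1 hf)
    simp [hnull]
  · calc μ {x | σ < f x} ≤ 1 := prob_le_one
      _ ≤ ENNReal.ofReal (B / σ) :=
          ENNReal.one_le_ofReal.2 ((one_le_div hσ).2 (not_le.1 hBσ).le)

/-- Theorem 1 (probabilistic / expected-robustness form): if the law `μ` of the perturbed
feature matrix is supported in the set of matrices whose rows deviate from those of `X`
by at most `ε` in `ℓ∞` norm, then the probability that the output of an `L`-layer GCN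
moves by more than `σ` (in the max-over-nodes `ℓ∞` sense) is at most
`(∏ ℓ, ‖W⁽ˡ⁾‖_∞) · ε · ŵ_G / σ`, where `ŵ_G = max_u ∑ v, (Ã^L)_{u v}`. -/
theorem gcn_expected_robustness_feature_attack
    {n : ℕ} (L : ℕ) (d : ℕ → ℕ) (φ : ℕ → ℝ → ℝ)
    (A : Matrix (Fin n) (Fin n) ℝ) (hA : ∀ i j, 0 ≤ A i j)
    (W : (ℓ : ℕ) → Matrix (Fin (d ℓ)) (Fin (d (ℓ + 1))) ℝ)
    (hφ : ∀ ℓ, LipschitzWith 1 (φ ℓ))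
    (X : Matrix (Fin n) (Fin (d 0)) ℝ) (ε : ℝ) (hε : 0 ≤ ε) (σ : ℝ) (hσ : 0 < σ)
    (μ : Measure (Matrix (Fin n) (Fin (d 0)) ℝ)) [IsProbabilityMeasure μ]
    (hsupp : ∀ᵐ X' ∂μ, ∀ v : Fin n, ‖X v - X' v‖ ≤ ε) :
    μ {X' | σ < ⨆ u : Fin n, ‖gcn d φ A W X' L u - gcn d φ A W X L u‖} ≤
      ENNReal.ofReal
        ((∏ ℓ ∈ Finset.range L, opNormInf (W ℓ)) * ε *
          (⨆ u : Fin n, ∑ v : Fin n, (A ^ L) u v) / σ) := by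
  refine measure_lt_le_ofReal_div_of_ae_le μ hσ ?_
  filter_upwards [hsupp] with X' hX'
  have hc : 0 ≤ (∏ ℓ ∈ range L, opNormInf (W ℓ)) * ε :=
    mul_nonneg (prod_nonneg fun ℓ _ => opNormInf_nonneg _) hε
  rw [Real.mul_iSup_of_nonneg hc]
  exact ciSup_mono (Finite.bddAbove_range _) fun u =>
    norm_gcn_sub_le d φ A hA W hφ (fun v => (norm_sub_rev _ _).trans_le (hX' v)) L u
end

section
/- Consider an L-layer GCN as below, with each activation additionally satisfying φ^{(ℓ)}(0) = 0 and with every weight matrix satisfying ‖W^{(ℓ)}‖₂ ≥ 1. Let Ã, Ã' ∈ ℝ^{n×n} satisfy ‖Ã‖₂ ≤ 1, ‖Ã'‖₂ ≤ 1, and ‖Ã − Ã'‖₂ ≤ ε₁, and let X, X' ∈ ℝ^{n×K} satisfy ‖X − X'‖_F ≤ ε₂ and ‖X'‖_F ≤ B. Then, for simultaneous structural and feature perturbations: ‖F_Ã(X) − F_{Ã'}(X')‖_F ≤ (∏_{ℓ=1}^{L} ‖W^{(ℓ)}‖₂) · (ε₂ + B · ε₁ · (1 + L · ∏_{ℓ=1}^{L}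 ‖W^{(ℓ)}‖₂)). -/
open scoped BigOperators

/-- The Frobenius norm of a real matrix. -/
noncomputable def frob {n m : ℕ} (M : Matrix (Fin n) (Fin m) ℝ) : ℝ :=
  Real.sqrt (∑ i : Fin n, ∑ j : Fin m, (M i j) ^ 2)

/-- The spectral norm (operator norm induced by the Euclidean vector norm) of a real
matrix. -/
noncomputable def spec {n m : ℕ} (M : Matrix (Fin n) (Fin m) ℝ) : ℝ :=
  ‖LinearMap.toContinuousLinearMap (Matrix.toEuclideanLin M)‖

/-!
Write `P_ℓ = ∏_{k<ℓ} ‖W⁽ᵏ⁾‖₂` and `D_ℓ = ‖H_ℓ − H'_ℓ‖_F` for the two trajectories.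
Since `‖M N‖_F ≤ ‖M‖₂ ‖N‖_F` and `‖M N‖_F ≤ ‖M‖_F ‖N‖₂`, and 1-Lipschitz activations do not
increase Frobenius distances, the clean trajectory satisfies `‖H'_ℓ‖_F ≤ P_ℓ B`. Splitting
`Ã H W − Ã' H' W = (Ã (H − H') + (Ã − Ã') H') W` gives
`D_{ℓ+1} ≤ ‖W⁽ˡ⁾‖₂ (D_ℓ + ε₁ P_ℓ B)`, hence `D_L ≤ P_L (ε₂ + L ε₁ B)`, which is at most the
claimed bound because `P_L ≥ 1`.
-/

open Matrix

section Norms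

variable {l n m k : ℕ}

lemma frob_nonneg (M : Matrix (Fin n) (Fin m) ℝ) : 0 ≤ frob M :=
  Real.sqrt_nonneg _

lemma spec_nonneg (M : Matrix (Fin n) (Fin m) ℝ) : 0 ≤ spec M :=
  norm_nonneg _

lemma spec_transpose (M : Matrix (Fin n) (Fin m) ℝ) : spec Mᵀ = spec M := by
  have h := l2_opNorm_conjTranspose M
  rwa [conjTranspose_eq_transpose_of_trivial] at h

lemma norm_toLp_mulVec_le (M : Matrix (Fin n) (Fin m) ℝ) (v : Fin m → ℝ) :
    ‖WithLp.toLp 2 (M *ᵥ v)‖ ≤ spec M * ‖WithLp.toLp 2 v‖ :=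
  l2_opNorm_mulVec M (WithLp.toLp 2 v)

lemma frob_sq_eq_sum_rows (M : Matrix (Fin n) (Fin m) ℝ) :
    frob M ^ 2 = ∑ i, ‖WithLp.toLp 2 (M i)‖ ^ 2 := by
  simp only [frob, EuclideanSpace.real_norm_sq_eq]
  exact Real.sq_sqrt (by positivity)

lemma frob_le_of_norm_row_le {N : Matrix (Fin n) (Fin k) ℝ} {M : Matrix (Fin n) (Fin m) ℝ}
    {c : ℝ} (hc : 0 ≤ c) (h : ∀ i, ‖WithLp.toLp 2 (N i)‖ ≤ c * ‖WithLp.toLp 2 (M i)‖) :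
    frob N ≤ c * frob M := by
  refine (pow_le_pow_iff_left₀ (frob_nonneg N) (by positivity [frob_nonneg M]) two_ne_zero).1 ?_
  rw [mul_pow, frob_sq_eq_sum_rows, frob_sq_eq_sum_rows, Finset.mul_sum]
  gcongr with i
  simpa only [mul_pow] using pow_le_pow_left₀ (norm_nonneg _) (h i) 2

lemma frob_mul_le_frob_mul_spec (M : Matrix (Fin n) (Fin m) ℝ) (W : Matrix (Fin m) (Fin k) ℝ) :
    frob (M * W) ≤ frob M * spec W := by
  rw [mul_comm, ← spec_transpose]
  refine frob_le_of_norm_row_le (spec_nonneg _) fun i => ?_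
  rw [mul_apply_eq_vecMul, ← mulVec_transpose]
  exact norm_toLp_mulVec_le _ _

lemma frob_transpose (M : Matrix (Fin n) (Fin m) ℝ) : frob Mᵀ = frob M := by
  rw [frob, frob, Finset.sum_comm]
  rfl

lemma frob_mul_le_spec_mul_frob (A : Matrix (Fin n) (Fin m) ℝ) (M : Matrix (Fin m) (Fin k) ℝ) :
    frob (A * M) ≤ spec A * frob M := by
  rw [← frob_transpose, transpose_mul, ← spec_transpose A, ← frob_transpose M, mul_comm]
  exact frob_mul_le_frob_mul_spec _ _

lemma frob_mul_mul_le (A : Matrix (Fin l) (Fin n) ℝ) (M : Matrix (Fin n) (Fin m) ℝ)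
    (W : Matrix (Fin m) (Fin k) ℝ) : frob (A * M * W) ≤ spec A * frob M * spec W :=
  (frob_mul_le_frob_mul_spec _ W).trans <|
    mul_le_mul_of_nonneg_right (frob_mul_le_spec_mul_frob A M) (spec_nonneg W)

lemma frob_eq_frobenius_norm (M : Matrix (Fin n) (Fin m) ℝ) :
    frob M = @norm _ frobeniusNormedAddCommGroup.toNorm M := by
  rw [frob, frobenius_norm_def, Real.sqrt_eq_rpow]
  simp [Real.norm_eq_abs, sq_abs]

lemma frob_add_le (M N : Matrix (Fin n) (Fin m) ℝ) : frob (M + N) ≤ frob M + frob N := by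
  let := @frobeniusNormedAddCommGroup (Fin n) (Fin m) ℝ _ _ _
  simpa only [frob_eq_frobenius_norm] using norm_add_le M N

lemma frob_mul_mul_sub_mul_mul_le (A A' : Matrix (Fin l) (Fin n) ℝ)
    (M M' : Matrix (Fin n) (Fin m) ℝ) (W : Matrix (Fin m) (Fin k) ℝ) :
    frob (A * M * W - A' * M' * W) ≤
      (spec A * frob (M - M') + spec (A - A') * frob M') * spec W := by
  have hsplit : A * M * W - A' * M' * W = (A * (M - M') + (A - A') * M') * W := by
    simp only [Matrix.add_mul, Matrix.sub_mul, Matrix.mul_sub]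
    abel
  calc frob (A * M * W - A' * M' * W)
      ≤ frob (A * (M - M') + (A - A') * M') * spec W := by
        rw [hsplit]
        exact frob_mul_le_frob_mul_spec _ W
    _ ≤ (frob (A * (M - M')) + frob ((A - A') * M')) * spec W := by
        gcongr
        exacts [spec_nonneg W, frob_add_le _ _]
    _ ≤ (spec A * frob (M - M') + spec (A - A') * frob M') * spec W :=
        mul_le_mul_of_nonneg_right
          (add_le_add (frob_mul_le_spec_mul_frob _ _) (frob_mul_le_spec_mul_frob _ _))
          (spec_nonneg W)

lemma frob_map_sub_map_le {f : ℝ → ℝ} (hf : LipschitzWith 1 f) (M N : Matrix (Fin n) (Fin m) ℝ) :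
    frob (M.map f - N.map f) ≤ frob (M - N) := by
  refine Real.sqrt_le_sqrt (Finset.sum_le_sum fun i _ => Finset.sum_le_sum fun j _ => ?_)
  refine sq_le_sq.2 ?_
  simpa [Real.dist_eq] using hf.dist_le_mul (M i j) (N i j)

lemma frob_map_le {f : ℝ → ℝ} (hf : LipschitzWith 1 f) (hf0 : f 0 = 0)
    (M : Matrix (Fin n) (Fin m) ℝ) : frob (M.map f) ≤ frob M := by
  simpa [Matrix.map_zero f hf0] using frob_map_sub_map_le hf M 0

end Norms

section GCN

variable {n : ℕ} {d : ℕ → ℕ} {φ : ℕ → ℝ → ℝ}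
  {W : (ℓ : ℕ) → Matrix (Fin (d ℓ)) (Fin (d (ℓ + 1))) ℝ}

lemma frob_gcn_le (hφ : ∀ ℓ, LipschitzWith 1 (φ ℓ)) (hφ0 : ∀ ℓ, φ ℓ 0 = 0)
    {A : Matrix (Fin n) (Fin n) ℝ} (hA : spec A ≤ 1) (X : Matrix (Fin n) (Fin (d 0)) ℝ) (ℓ : ℕ) :
    frob (gcn d φ A W X ℓ) ≤ (∏ k ∈ Finset.range ℓ, spec (W k)) * frob X := by
  induction ℓ with
  | zero => simp [gcn]
  | succ ℓ ih =>
    calc frob (gcn d φ A W X (ℓ + 1)) ≤ frob (A * gcn d φ A W X ℓ * W ℓ) :=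
          frob_map_le (hφ _) (hφ0 _) _
      _ ≤ spec A * frob (gcn d φ A W X ℓ) * spec (W ℓ) := frob_mul_mul_le _ _ _
      _ ≤ 1 * ((∏ k ∈ Finset.range ℓ, spec (W k)) * frob X) * spec (W ℓ) := by
          gcongr
          exacts [spec_nonneg _, frob_nonneg _]
      _ = (∏ k ∈ Finset.range (ℓ + 1), spec (W k)) * frob X := by
          rw [Finset.prod_range_succ]
          ring

lemma frob_gcn_sub_gcn_le (hφ : ∀ ℓ, LipschitzWith 1 (φ ℓ)) (hφ0 : ∀ ℓ, φ ℓ 0 = 0)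
    {A A' : Matrix (Fin n) (Fin n) ℝ} (hA : spec A ≤ 1) (hA' : spec A' ≤ 1)
    (X X' : Matrix (Fin n) (Fin (d 0)) ℝ) (ℓ : ℕ) :
    frob (gcn d φ A W X ℓ - gcn d φ A' W X' ℓ) ≤
      (∏ k ∈ Finset.range ℓ, spec (W k)) * (frob (X - X') + ℓ * spec (A - A') * frob X') := by
  induction ℓ with
  | zero => simp [gcn]
  | succ ℓ ih =>
    calc frob (gcn d φ A W X (ℓ + 1) - gcn d φ A' W X' (ℓ + 1))
        ≤ frob (A * gcn d φ A W X ℓ * W ℓ - A' * gcn d φ A' W X' ℓ * W ℓ) :=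
          frob_map_sub_map_le (hφ _) _ _
      _ ≤ (spec A * frob (gcn d φ A W X ℓ - gcn d φ A' W X' ℓ)
            + spec (A - A') * frob (gcn d φ A' W X' ℓ)) * spec (W ℓ) :=
          frob_mul_mul_sub_mul_mul_le _ _ _ _ _
      _ ≤ (1 * ((∏ k ∈ Finset.range ℓ, spec (W k)) * (frob (X - X') + ℓ * spec (A - A') * frob X'))
            + spec (A - A') * ((∏ k ∈ Finset.range ℓ, spec (W k)) * frob X')) * spec (W ℓ) := by
          gcongr
          exacts [spec_nonneg _, frob_nonneg _, spec_nonneg _, frob_gcn_le hφ hφ0 hA' X' ℓ]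
      _ = (∏ k ∈ Finset.range (ℓ + 1), spec (W k)) *
            (frob (X - X') + ↑(ℓ + 1) * spec (A - A') * frob X') := by
          rw [Finset.prod_range_succ]
          push_cast
          ring

end GCN

/-- Appendix E bound: simultaneous structural (budget `ε₁`) and feature (budget `ε₂`)
perturbations of an `L`-layer GCN with 1-Lipschitz activations vanishing at `0`, weight
matrices of spectral norm at least `1`, `‖Ã‖₂, ‖Ã'‖₂ ≤ 1` and `‖X'‖_F ≤ B`:
`‖F_Ã(X) − F_{Ã'}(X')‖_F ≤ (∏ ℓ, ‖W⁽ˡ⁾‖₂) (ε₂ + B ε₁ (1 + L ∏ ℓ, ‖W⁽ˡ⁾‖₂))`. -/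
theorem gcn_simultaneous_attack_bound
    {n : ℕ} (L : ℕ) (d : ℕ → ℕ) (φ : ℕ → ℝ → ℝ)
    (W : (ℓ : ℕ) → Matrix (Fin (d ℓ)) (Fin (d (ℓ + 1))) ℝ)
    (hφ : ∀ ℓ, LipschitzWith 1 (φ ℓ)) (hφ0 : ∀ ℓ, φ ℓ 0 = 0)
    (hW : ∀ ℓ < L, 1 ≤ spec (W ℓ))
    (A A' : Matrix (Fin n) (Fin n) ℝ) (ε₁ ε₂ B : ℝ)
    (hA : spec A ≤ 1) (hA' : spec A' ≤ 1) (hAA' : spec (A - A') ≤ ε₁)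
    (X X' : Matrix (Fin n) (Fin (d 0)) ℝ)
    (hX : frob (X - X') ≤ ε₂) (hX' : frob X' ≤ B) :
    frob (gcn d φ A W X L - gcn d φ A' W X' L) ≤
      (∏ ℓ ∈ Finset.range L, spec (W ℓ)) *
        (ε₂ + B * ε₁ * (1 + (L : ℝ) * ∏ ℓ ∈ Finset.range L, spec (W ℓ))) := by
  set P := ∏ ℓ ∈ Finset.range L, spec (W ℓ)
  have hε₁ : 0 ≤ ε₁ := (spec_nonneg _).trans hAA'
  have hB : 0 ≤ B := (frob_nonneg _).trans hX'
  have hP : 1 ≤ P := Finset.one_le_prod fun ℓ hℓ => hW ℓ (Finset.mem_range.1 hℓ)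
  have hLP : (L : ℝ) * ε₁ * B ≤ B * ε₁ * (1 + L * P) := by
    nlinarith [mul_nonneg (mul_nonneg hB hε₁) (Nat.cast_nonneg (α := ℝ) L)]
  calc frob (gcn d φ A W X L - gcn d φ A' W X' L)
      ≤ P * (frob (X - X') + L * spec (A - A') * frob X') :=
        frob_gcn_sub_gcn_le hφ hφ0 hA hA' X X' L
    _ ≤ P * (ε₂ + L * ε₁ * B) := by
        gcongr
        exact frob_nonneg _
    _ ≤ P * (ε₂ + B * ε₁ * (1 + L * P)) := by
        gcongr
end
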